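/- arXiv:1704.02891 — 2 statements merged into one kernel-verified Lean document; each statement's English description precedes it below -/
import Mathlib

section
/- Let H be a real Hilbert space, V ⊆ H a subspace with its own inner product, A : V → V' the duality map, and suppose A has an orthonormal basis of eigenvectors (w_j) in H with eigenvalues λ_j ≥ c j^α for constants c, α > 0. Then the Kolmogorov ε-entropy of the unit ball B_V(0,1) in H satisfies H_ε(B_V(0,1), H) < ((log 3 + α)/log 2) · (2/(c ε²))^{1/α} for all ε > 0. -/
/-!
Cut the basis at `T = (2 / (c ε²))^(1/α)`: beyond it `λⱼ ≥ 2 / ε²`, so by Parseval the tail of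
every `u` in the ellipsoid has norm at most `ε / √2`. The first `N = ⌊T⌋` coordinates of `u` lie
in a Euclidean ellipsoid with semi-axes `ρ (T / (j + 1))^(α/2) ≥ ρ = ε / √2`. A maximal
`ρ`-separated subset of that ellipsoid is a `ρ`-cover, and its `ρ/2`-balls are disjoint and fit in
the ellipsoid dilated by `3/2`, so comparing volumes bounds it by
`3^N ∏ⱼ (T / (j + 1))^(α/2) = 3^N (T^N / N!)^(α/2) ≤ 3^N e^(αT/2)` points.
-/

open scoped InnerProductSpace NNReal ENNReal
open Metric MeasureTheory Measure Module

namespace Metric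

theorem exists_finset_isCover_of_forall_card_le {X : Type*} [PseudoEMetricSpace X] {A : Set X}
    {ε : ℝ≥0} {M : ℕ}
    (h : ∀ S : Finset X, ↑S ⊆ A → IsSeparated ε (S : Set X) → S.card ≤ M) :
    ∃ S : Finset X, ↑S ⊆ A ∧ S.card ≤ M ∧ IsCover ε A S := by
  have hpacking : packingNumber ε A ≤ M := by
    refine iSup₂_le fun C hCA => iSup_le fun hC => ?_
    by_contra! hlt
    obtain ⟨t, htC, ht⟩ := Set.exists_subset_encard_eq (k := (M + 1 : ℕ))
      (by exact_mod_cast Order.add_one_le_of_lt hlt)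
    have htfin : t.Finite := Set.finite_of_encard_eq_coe ht
    have := h htfin.toFinset (by simpa using htC.trans hCA) (by simpa using hC.subset htC)
    rw [← Set.ncard_eq_toFinset_card t htfin, Set.ncard_def, ht, ENat.toNat_natCast] at this
    omega
  have htop : packingNumber ε A ≠ ⊤ := ne_top_of_le_ne_top (by simp) hpacking
  have hfin : (maximalSeparatedSet ε A).Finite := by
    rw [← Set.encard_ne_top_iff, encard_maximalSeparatedSet htop]
    exact htop
  refine ⟨hfin.toFinset, by simpa using maximalSeparatedSet_subset, ?_, ?_⟩
  · exact h _ (by simpa using maximalSeparatedSet_subset)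
      (by simpa using isSeparated_maximalSeparatedSet)
  · simpa using isCover_maximalSeparatedSet htop

end Metric

namespace LinearMap

variable {E : Type*} [NormedAddCommGroup E] [NormedSpace ℝ E]

theorem closedBall_subset_image_closedBall_three_halves (D : E →ₗ[ℝ] E) {ρ : ℝ}
    (hD : closedBall 0 ρ ⊆ D '' closedBall 0 1) {x : E} (hx : x ∈ D '' closedBall 0 1) :
    closedBall x (ρ / 2) ⊆ D '' closedBall 0 (3 / 2) := by
  intro z hz
  obtain ⟨x', hx', rfl⟩ := hx
  obtain ⟨y, hy, hyz⟩ := hD (show (2 : ℝ) • (z - D x') ∈ closedBall 0 ρ by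
    rw [mem_closedBall_zero_iff, norm_smul, Real.norm_two]
    rw [mem_closedBall, dist_eq_norm] at hz
    linarith)
  refine ⟨x' + (1 / 2 : ℝ) • y, ?_, ?_⟩
  · rw [mem_closedBall_zero_iff] at hx' hy ⊢
    calc ‖x' + (1 / 2 : ℝ) • y‖ ≤ ‖x'‖ + 1 / 2 * ‖y‖ := by
          simpa [norm_smul] using norm_add_le x' ((1 / 2 : ℝ) • y)
      _ ≤ 3 / 2 := by linarith
  · rw [map_add, map_smul, hyz, smul_smul]
    norm_num

theorem card_le_of_isSeparated_subset_image_closedBall [FiniteDimensional ℝ E] (D : E →ₗ[ℝ] E)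
    {ρ : ℝ≥0} (hρ : 0 < ρ) (hD : closedBall 0 ρ ⊆ D '' closedBall 0 1) {S : Finset E}
    (hS : ↑S ⊆ D '' closedBall 0 1) (hsep : IsSeparated ρ (S : Set E)) :
    (S.card : ℝ) ≤ |LinearMap.det D| * (3 / ρ) ^ finrank ℝ E := by
  borelize E
  set μ : Measure E := Measure.addHaar
  set n := finrank ℝ E
  have hdisj : (S : Set E).PairwiseDisjoint fun x => closedBall x (ρ / 2) := by
    intro x hx y hy hxy
    refine closedBall_disjoint_closedBall ?_
    have h : (ρ : ℝ≥0∞) < edist x y := hsep hx hy hxy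
    rw [edist_nndist, ENNReal.coe_lt_coe, ← NNReal.coe_lt_coe, coe_nndist] at h
    linarith
  have hunit : 0 < μ.real (closedBall 0 1) :=
    ENNReal.toReal_pos (measure_closedBall_pos μ 0 one_pos).ne' measure_closedBall_lt_top.ne
  have hvol : S.card * ((ρ / 2 : ℝ) ^ n * μ.real (closedBall 0 1)) ≤
      |LinearMap.det D| * ((3 / 2 : ℝ) ^ n * μ.real (closedBall 0 1)) := by
    calc S.card * ((ρ / 2 : ℝ) ^ n * μ.real (closedBall 0 1))
        = μ.real (⋃ x ∈ S, closedBall x (ρ / 2)) := by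
          rw [measureReal_biUnion_finset hdisj (fun _ _ => measurableSet_closedBall)
            (fun _ _ => measure_closedBall_lt_top.ne)]
          simp [n, addHaar_real_closedBall' μ _ (by positivity : (0 : ℝ) ≤ ρ / 2)]
      _ ≤ μ.real (D '' closedBall 0 (3 / 2)) :=
          measureReal_mono (Set.iUnion₂_subset fun x hx =>
            closedBall_subset_image_closedBall_three_halves D hD (hS hx))
            (isCompact_closedBall 0 _ |>.image D.continuous_of_finiteDimensional).measure_ne_top
      _ = _ := by
          rw [measureReal_def, addHaar_image_linearMap, ENNReal.toReal_mul,
            ENNReal.toReal_ofReal (abs_nonneg _), ← measureReal_def,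
            addHaar_real_closedBall' μ _ (by norm_num : (0 : ℝ) ≤ 3 / 2)]
  have hscale : (3 / ρ : ℝ) ^ n * (ρ / 2) ^ n = (3 / 2) ^ n := by
    rw [← mul_pow]
    field_simp
  refine le_of_mul_le_mul_right ?_ (by positivity : 0 < (ρ / 2 : ℝ) ^ n * μ.real (closedBall 0 1))
  calc _ ≤ _ := hvol
    _ = _ := by rw [← hscale]; ring

end LinearMap

namespace EuclideanSpace

variable {ι : Type*} [Fintype ι]

theorem mem_image_diagonal_closedBall [DecidableEq ι] {β : ι → ℝ} (hβ : ∀ i, 0 < β i)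
    {x : EuclideanSpace ℝ ι} (hx : ∑ i, (x i / β i) ^ 2 ≤ 1) :
    x ∈ Matrix.toEuclideanLin (Matrix.diagonal β) '' closedBall 0 1 := by
  refine ⟨WithLp.toLp 2 fun i => x i / β i, ?_, ?_⟩
  · rw [mem_closedBall_zero_iff, ← sq_le_one_iff₀ (norm_nonneg _), real_norm_sq_eq]
    exact hx
  · ext i
    simp [Matrix.toLpLin_apply, Matrix.mulVec_diagonal, mul_div_cancel₀ _ (hβ i).ne']

theorem closedBall_subset_image_diagonal_closedBall [DecidableEq ι] {β : ι → ℝ} {ρ : ℝ}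
    (hρ : 0 < ρ) (hβ : ∀ i, ρ ≤ β i) :
    closedBall 0 ρ ⊆ Matrix.toEuclideanLin (Matrix.diagonal β) '' closedBall 0 1 := by
  intro x hx
  refine mem_image_diagonal_closedBall (fun i => hρ.trans_le (hβ i)) ?_
  calc ∑ i, (x i / β i) ^ 2 ≤ ∑ i, (x i / ρ) ^ 2 := by
        simp_rw [div_pow]
        gcongr with i
        exact hβ i
    _ = ‖x‖ ^ 2 / ρ ^ 2 := by simp_rw [div_pow, ← Finset.sum_div, real_norm_sq_eq]
    _ ≤ 1 := by
        rw [div_le_one (by positivity)]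
        gcongr
        simpa using hx

theorem exists_finset_cover_ellipsoid {ρ : ℝ≥0} (hρ : 0 < ρ) (r : ι → ℝ) (hr : ∀ i, 1 ≤ r i) :
    ∃ S : Finset (EuclideanSpace ℝ ι), (S.card : ℝ) ≤ 3 ^ Fintype.card ι * ∏ i, r i ∧
      ∀ x : EuclideanSpace ℝ ι, ∑ i, (x i / (ρ * r i)) ^ 2 ≤ 1 → ∃ y ∈ S, dist x y ≤ ρ := by
  classical
  have hβ i : (ρ : ℝ) ≤ ρ * r i := le_mul_of_one_le_right ρ.2 (hr i)
  have hβpos i : 0 < (ρ : ℝ) * r i := (NNReal.coe_pos.2 hρ).trans_le (hβ i)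
  have hdet : |LinearMap.det (Matrix.toEuclideanLin (Matrix.diagonal fun i => ρ * r i))| *
      (3 / ρ) ^ Fintype.card ι = 3 ^ Fintype.card ι * ∏ i, r i := by
    rw [Matrix.toEuclideanLin_eq_toLin_orthonormal, LinearMap.det_toLin, Matrix.det_diagonal,
      abs_of_pos (Finset.prod_pos fun i _ => hβpos i), Finset.prod_mul_distrib,
      Finset.prod_const, Finset.card_univ, div_pow]
    field_simp
  obtain ⟨S, -, hcard, hcover⟩ := Metric.exists_finset_isCover_of_forall_card_le
    (A := Matrix.toEuclideanLin (Matrix.diagonal fun i => ρ * r i) '' closedBall 0 1) (ε := ρ)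
    (M := ⌊3 ^ Fintype.card ι * ∏ i, r i⌋₊) fun S hS hsep => by
      refine Nat.le_floor ?_
      have := LinearMap.card_le_of_isSeparated_subset_image_closedBall _ hρ
        (closedBall_subset_image_diagonal_closedBall (β := fun i => ρ * r i)
          (NNReal.coe_pos.2 hρ) hβ) hS hsep
      rwa [finrank_euclideanSpace, hdet] at this
  refine ⟨S, (Nat.cast_le.2 hcard).trans (Nat.floor_le ?_), fun x hx => ?_⟩
  · exact mul_nonneg (by positivity) (Finset.prod_nonneg fun i _ => zero_le_one.trans (hr i))
  · have := isCover_iff_subset_iUnion_closedBall.1 hcover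
      (mem_image_diagonal_closedBall hβpos hx)
    simpa [mem_closedBall] using this

end EuclideanSpace

namespace HilbertBasis

variable {ι H : Type*} [NormedAddCommGroup H] [InnerProductSpace ℝ H]

theorem inner_sum_smul_left_of_mem (b : HilbertBasis ι ℝ H) {s : Finset ι} (y : s → ℝ) {i : ι}
    (hi : i ∈ s) : ⟪∑ j : s, y j • b j, b i⟫_ℝ = y ⟨i, hi⟩ := by
  simpa using b.orthonormal.comp _ Subtype.val_injective |>.inner_left_fintype y ⟨i, hi⟩

theorem inner_sum_smul_left_of_notMem (b : HilbertBasis ι ℝ H) {s : Finset ι} (y : s → ℝ)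
    {i : ι} (hi : i ∉ s) : ⟪∑ j : s, y j • b j, b i⟫_ℝ = 0 := by
  refine (sum_inner _ _ _).trans (Finset.sum_eq_zero fun j _ => ?_)
  rw [real_inner_smul_left, b.orthonormal.inner_eq_zero (ne_of_mem_of_not_mem j.2 hi), mul_zero]

theorem norm_sub_sum_smul_sq_le (b : HilbertBasis ι ℝ H) {lam : ι → ℝ} (hlam : ∀ i, 0 ≤ lam i)
    {s : Finset ι} {δ : ℝ} (hδ : 0 ≤ δ) (hδs : ∀ i ∉ s, 1 ≤ δ * lam i) {u : H}
    (hu : Summable fun i => lam i * ⟪u, b i⟫_ℝ ^ 2) (y : s → ℝ) :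
    ‖u - ∑ i : s, y i • b i‖ ^ 2 ≤
      ∑ i : s, (⟪u, b i⟫_ℝ - y i) ^ 2 + δ * ∑' i, lam i * ⟪u, b i⟫_ℝ ^ 2 := by
  classical
  set v := ∑ i : s, y i • b i
  have hparseval : HasSum (fun i => ⟪u - v, b i⟫_ℝ ^ 2) (‖u - v‖ ^ 2) := by
    simpa only [real_inner_comm (b _), ← sq, real_inner_self_eq_norm_sq]
      using b.hasSum_inner_mul_inner (u - v) (u - v)
  have hlow : HasSum (fun i => if h : i ∈ s then (⟪u, b i⟫_ℝ - y ⟨i, h⟩) ^ 2 else 0)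
      (∑ i : s, (⟪u, b i⟫_ℝ - y i) ^ 2) := by
    rw [← Function.Injective.hasSum_iff Subtype.val_injective fun i hi => dif_neg fun h =>
      hi ⟨⟨i, h⟩, rfl⟩]
    convert hasSum_fintype _ with i
    simp
  refine hasSum_le (fun i => ?_) hparseval (hlow.add (hu.hasSum.mul_left δ))
  rw [inner_sub_left]
  split_ifs with h
  · rw [inner_sum_smul_left_of_mem b y h]
    exact le_add_of_nonneg_right (mul_nonneg hδ (mul_nonneg (hlam i) (sq_nonneg _)))
  · rw [inner_sum_smul_left_of_notMem b y h]
    nlinarith [mul_le_mul_of_nonneg_right (hδs i h) (sq_nonneg ⟪u, b i⟫_ℝ)]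

theorem exists_finset_cover_ellipsoid (b : HilbertBasis ι ℝ H) {lam : ι → ℝ}
    (hlam : ∀ i, 0 ≤ lam i) (s : Finset ι) {ρ : ℝ≥0} (hρ : 0 < ρ) (r : ι → ℝ)
    (hr : ∀ i ∈ s, 1 ≤ r i) (hrlam : ∀ i ∈ s, 1 ≤ ρ ^ 2 * r i ^ 2 * lam i) {δ : ℝ} (hδ : 0 ≤ δ)
    (hδs : ∀ i ∉ s, 1 ≤ δ * lam i) :
    ∃ S : Finset H, (S.card : ℝ) ≤ 3 ^ s.card * ∏ i ∈ s, r i ∧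
      {u | Summable (fun i => lam i * ⟪u, b i⟫_ℝ ^ 2) ∧ ∑' i, lam i * ⟪u, b i⟫_ℝ ^ 2 ≤ 1} ⊆
        ⋃ x ∈ S, closedBall x √(ρ ^ 2 + δ) := by
  classical
  obtain ⟨S, hcard, hcover⟩ :=
    EuclideanSpace.exists_finset_cover_ellipsoid hρ (fun i : s => r i) fun i => hr i i.2
  refine ⟨S.image fun y => ∑ i : s, y i • b i, ?_, ?_⟩
  · rw [Finset.prod_coe_sort s r, Fintype.card_coe] at hcard
    exact (Nat.cast_le.2 Finset.card_image_le).trans hcard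
  rintro u ⟨hu, hu1⟩
  have hmem : ∑ i : s, (⟪u, b i⟫_ℝ / (ρ * r i)) ^ 2 ≤ 1 := by
    calc ∑ i : s, (⟪u, b i⟫_ℝ / (ρ * r i)) ^ 2 ≤ ∑ i : s, lam i * ⟪u, b i⟫_ℝ ^ 2 := by
          refine Finset.sum_le_sum fun i _ => ?_
          have hri : 0 < (ρ : ℝ) * r i := mul_pos hρ (zero_lt_one.trans_le (hr i i.2))
          rw [div_pow, div_le_iff₀ (by positivity), mul_pow]
          nlinarith [mul_le_mul_of_nonneg_right (hrlam i i.2) (sq_nonneg ⟪u, b i⟫_ℝ)]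
      _ = ∑ i ∈ s, lam i * ⟪u, b i⟫_ℝ ^ 2 := Finset.sum_coe_sort s fun i => lam i * ⟪u, b i⟫_ℝ ^ 2
      _ ≤ ∑' i, lam i * ⟪u, b i⟫_ℝ ^ 2 :=
          hu.sum_le_tsum s fun i _ => mul_nonneg (hlam i) (sq_nonneg _)
      _ ≤ 1 := hu1
  obtain ⟨y, hyS, hy⟩ := hcover (WithLp.toLp 2 fun i : s => ⟪u, b i⟫_ℝ) hmem
  refine Set.mem_iUnion₂.2 ⟨_, Finset.mem_image_of_mem _ hyS, ?_⟩
  rw [mem_closedBall, dist_eq_norm, ← Real.sqrt_sq (norm_nonneg _)]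
  refine Real.sqrt_le_sqrt ?_
  calc _ ≤ ∑ i : s, (⟪u, b i⟫_ℝ - y i) ^ 2 + δ * ∑' i, lam i * ⟪u, b i⟫_ℝ ^ 2 :=
        b.norm_sub_sum_smul_sq_le hlam hδ hδs hu y
    _ ≤ ρ ^ 2 + δ * 1 := by
        gcongr
        rw [← Real.sqrt_le_sqrt_iff (by positivity), Real.sqrt_sq (NNReal.coe_nonneg ρ)]
        simpa [EuclideanSpace.dist_eq, Real.dist_eq, sq_abs] using hy
    _ = ρ ^ 2 + δ := by ring

end HilbertBasis

open Real Finset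

theorem prod_range_div_succ_rpow_le_exp {T a : ℝ} (hT : 0 ≤ T) (ha : 0 ≤ a) (N : ℕ) :
    ∏ i ∈ range N, (T / (i + 1)) ^ a ≤ exp (a * T) := by
  have hprod : ∏ i ∈ range N, T / (i + 1) = T ^ N / N.factorial := by
    rw [prod_div_distrib, prod_const, card_range, ← prod_range_add_one_eq_factorial]
    push_cast
    rfl
  rw [finsetProd_rpow _ _ (fun i _ => by positivity), hprod, mul_comm, exp_mul]
  exact rpow_le_rpow (by positivity) (pow_div_factorial_le_exp _ hT N) ha

theorem logb_two_lt_of_le_three_pow_mul_exp {k N : ℕ} {T α : ℝ} (hT : 0 < T) (hα : 0 < α)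
    (hN : (N : ℝ) ≤ T) (hk : (k : ℝ) ≤ 3 ^ N * exp (α / 2 * T)) :
    logb 2 k < (log 3 + α) / log 2 * T := by
  have hlog3 : 0 < log 3 := log_pos (by norm_num)
  rw [div_mul_eq_mul_div, logb]
  refine div_lt_div_of_pos_right ?_ (log_pos one_lt_two)
  rcases k.eq_zero_or_pos with rfl | hk0
  · simp only [Nat.cast_zero, log_zero]
    positivity
  calc log k ≤ log (3 ^ N * exp (α / 2 * T)) := log_le_log (by exact_mod_cast hk0) hk
    _ = N * log 3 + α / 2 * T := by rw [log_mul (by positivity) (by positivity), log_pow, log_exp]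
    _ < (log 3 + α) * T := by nlinarith

theorem one_le_mul_of_mul_rpow_eq_one {c α κ T x l : ℝ} (hc : 0 ≤ c) (hα : 0 ≤ α) (hκ : 0 ≤ κ)
    (hT : 0 ≤ T) (hTκ : κ * (c * T ^ α) = 1) (hTx : T ≤ x) (hl : c * x ^ α ≤ l) : 1 ≤ κ * l :=
  calc 1 = κ * (c * T ^ α) := hTκ.symm
    _ ≤ κ * (c * x ^ α) := by gcongr
    _ ≤ κ * l := by gcongr

theorem one_le_mul_div_rpow_half_sq_mul_of_mul_rpow_eq_one {c α κ T x l : ℝ} (hκ : 0 ≤ κ)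
    (hT : 0 ≤ T) (hx : 0 < x) (hTκ : κ * (c * T ^ α) = 1) (hl : c * x ^ α ≤ l) :
    1 ≤ κ * ((T / x) ^ (α / 2)) ^ 2 * l := by
  have hsq : ((T / x) ^ (α / 2)) ^ 2 = T ^ α / x ^ α := by
    rw [← rpow_mul_natCast (by positivity), div_rpow hT hx.le]
    norm_num
  calc 1 = κ * (T ^ α / x ^ α) * (c * x ^ α) := by
        rw [← hTκ]
        field_simp
    _ ≤ κ * ((T / x) ^ (α / 2)) ^ 2 * l := by rw [hsq]; gcongr

/-- Kolmogorov ε-entropy upper bound: if `H` is a real Hilbert space with an orthonormal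
basis `(w_j)` of eigenvectors of the duality map with eigenvalues `λ_j ≥ c j^α`
(0-indexed: `λ_j ≥ c (j+1)^α`), then the unit ball of `V`, described as
`B = {u : Σ_j λ_j ⟪u,w_j⟫² ≤ 1}`, admits for every `ε > 0` a finite `ε`-cover in `H`
whose binary logarithm of cardinality is `< ((log 3 + α)/log 2)·(2/(c ε²))^{1/α}`. -/
theorem stmt7 {H : Type*} [NormedAddCommGroup H] [InnerProductSpace ℝ H]
    [CompleteSpace H]
    (w : ℕ → H) (hw : Orthonormal ℝ w)
    (hw_total : ⊤ ≤ (Submodule.span ℝ (Set.range w)).topologicalClosure)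
    (lam : ℕ → ℝ) (c α : ℝ) (hc : 0 < c) (hα : 0 < α)
    (hlam : ∀ j : ℕ, c * ((j : ℝ) + 1) ^ α ≤ lam j)
    (B : Set H)
    (hB : B = {u : H | Summable (fun j => lam j * ⟪u, w j⟫_ℝ ^ 2) ∧
      ∑' j : ℕ, lam j * ⟪u, w j⟫_ℝ ^ 2 ≤ 1})
    (ε : ℝ) (hε : 0 < ε) :
    ∃ s : Finset H, (B ⊆ ⋃ x ∈ s, Metric.closedBall x ε) ∧
      Real.logb 2 s.card <
        ((Real.log 3 + α) / Real.log 2) * (2 / (c * ε ^ 2)) ^ (1 / α) := by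
  subst hB
  obtain ⟨b, rfl⟩ : ∃ b : HilbertBasis ℕ ℝ H, ⇑b = w := ⟨_, HilbertBasis.coe_mk hw hw_total⟩
  set T := (2 / (c * ε ^ 2)) ^ (1 / α) with hT_def
  have hT : 0 < T := by positivity
  have hTκ : ε ^ 2 / 2 * (c * T ^ α) = 1 := by
    rw [hT_def, one_div, rpow_inv_rpow (by positivity) hα.ne']
    field_simp
  obtain ⟨ρ, hρpos, hρ⟩ : ∃ ρ : ℝ≥0, 0 < ρ ∧ (ρ : ℝ) ^ 2 = ε ^ 2 / 2 :=
    ⟨⟨ε / √2, by positivity⟩, NNReal.coe_pos.1 (show 0 < ε / √2 by positivity),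
      by show (ε / √2) ^ 2 = _; rw [div_pow, sq_sqrt zero_le_two]⟩
  -- `ρ (T / (i + 1))^(α/2) = (c (i + 1)^α)^(-1/2)`, the semi-axes of `∑ c (i + 1)^α xᵢ² ≤ 1`.
  have hr : ∀ i ∈ range ⌊T⌋₊, 1 ≤ (T / (i + 1)) ^ (α / 2) := fun i hi =>
    one_le_rpow ((one_le_div (by positivity)).2 ((by exact_mod_cast mem_range.1 hi :
      (i : ℝ) + 1 ≤ ⌊T⌋₊).trans (Nat.floor_le hT.le))) (by positivity)
  have hrlam : ∀ i ∈ range ⌊T⌋₊, 1 ≤ ρ ^ 2 * ((T / (i + 1)) ^ (α / 2)) ^ 2 * lam i :=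
    fun i _ => hρ ▸ one_le_mul_div_rpow_half_sq_mul_of_mul_rpow_eq_one (by positivity) hT.le
      (by positivity) hTκ (hlam i)
  have htail : ∀ i ∉ range ⌊T⌋₊, 1 ≤ ε ^ 2 / 2 * lam i := fun i hi =>
    one_le_mul_of_mul_rpow_eq_one hc.le hα.le (by positivity) hT.le hTκ
      ((Nat.lt_floor_add_one T).le.trans
        (by exact_mod_cast Nat.succ_le_succ (not_lt.1 (mem_range.not.1 hi)))) (hlam i)
  obtain ⟨S, hcard, hcover⟩ := b.exists_finset_cover_ellipsoid
    (fun i => (mul_nonneg hc.le (by positivity)).trans (hlam i)) (range ⌊T⌋₊) hρpos _ hr hrlam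
    (by positivity) htail
  refine ⟨S, by rwa [hρ, add_halves, sqrt_sq hε.le] at hcover,
    logb_two_lt_of_le_three_pow_mul_exp hT hα (Nat.floor_le hT.le) (hcard.trans ?_)⟩
  rw [card_range]
  gcongr
  exact prod_range_div_succ_rpow_le_exp hT.le (by positivity) _
end

section
/- Suppose W, V : [0,∞) → [0,∞) satisfy W(t) + 2∫₀ᵗ V(s) ds ≤ e^{2λt} W(0) and V'(t) ≤ (1/2)λ²(1+γ/β)² e^{2λt} W(0) for all t > 0, where λ, γ, β > 0 and V is C¹. Then for every t > 0, V(t) ≤ λ W(0) [ e^{2λt}/(2λt) + (1/4)(1+γ/β)² (2λt e^{2λt} − (e^{2λt} − 1))/(2λt) ]. -/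
/-! Integrating `(s V(s))' = V(s) + s V'(s)` over `[0, t]` gives
`t V(t) = ∫₀ᵗ V + ∫₀ᵗ s V'(s) ds`. The first integral is at most `e^{2λt} W(0) / 2` by the
energy bound (as `W(t) ≥ 0`), and the second is controlled by the bound on `V'` and the
closed form of `∫₀ᵗ s e^{2λs} ds`. -/

open Set MeasureTheory

theorem mul_le_integral_add_integral_mul_of_deriv_le {f f' g : ℝ → ℝ} {t : ℝ} (ht : 0 ≤ t)
    (hf : ∀ s ∈ Icc 0 t, HasDerivAt f (f' s) s)
    (hg : IntervalIntegrable (fun s => s * g s) volume 0 t)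
    (hle : ∀ s ∈ Ioo 0 t, f' s ≤ g s) :
    t * f t ≤ (∫ s in (0 : ℝ)..t, f s) + ∫ s in (0 : ℝ)..t, s * g s := by
  have hfc : ContinuousOn f (Icc 0 t) := fun s hs => (hf s hs).continuousAt.continuousWithinAt
  have hfi : IntervalIntegrable f volume 0 t := (hfc.mono (uIcc_of_le ht).subset).intervalIntegrable
  rw [← intervalIntegral.integral_add hfi hg]
  have key := intervalIntegral.sub_le_integral_of_hasDeriv_right_of_le (g := fun s => s * f s)
    (g' := fun s => f s + s * f' s) (φ := fun s => f s + s * g s) ht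
    (continuousOn_id.mul hfc)
    (fun s hs => (((hasDerivAt_id s).mul (hf s (Ioo_subset_Icc_self hs))).congr_deriv
      (by simp)).hasDerivWithinAt)
    ((intervalIntegrable_iff_integrableOn_Icc_of_le ht).1 (hfi.add hg))
    (fun s hs => add_le_add_right (mul_le_mul_of_nonneg_left (hle s hs) hs.1.le) _)
  simpa using key

theorem integral_mul_exp_mul {a : ℝ} (ha : a ≠ 0) (t : ℝ) :
    ∫ s in (0 : ℝ)..t, s * Real.exp (a * s) =
      (a * t * Real.exp (a * t) - Real.exp (a * t) + 1) / a ^ 2 := by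
  have hF : ∀ s ∈ uIcc (0 : ℝ) t,
      HasDerivAt (fun u => Real.exp (a * u) * (a * u - 1) / a ^ 2) (s * Real.exp (a * s)) s := by
    intro s _
    have hlin : HasDerivAt (fun u => a * u) a s := by
      simpa using (hasDerivAt_id s).const_mul a
    refine ((hlin.exp.mul (hlin.sub_const 1)).div_const (a ^ 2)).congr_deriv ?_
    field_simp
    ring
  rw [intervalIntegral.integral_eq_sub_of_hasDerivAt hF
    ((by fun_prop : Continuous _).intervalIntegrable _ _)]
  field_simp
  simp

theorem stmt18_general (W V V' : ℝ → ℝ) (lam γ β : ℝ)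
    (hlam : 0 < lam)
    (hpos : ∀ t : ℝ, 0 ≤ t → 0 ≤ W t ∧ 0 ≤ V t)
    (hderiv : ∀ t : ℝ, 0 ≤ t → HasDerivAt V (V' t) t)
    (h1 : ∀ t : ℝ, 0 < t →
      W t + 2 * ∫ s in (0 : ℝ)..t, V s ≤ Real.exp (2 * lam * t) * W 0)
    (h2 : ∀ t : ℝ, 0 < t →
      V' t ≤ (1 / 2) * lam ^ 2 * (1 + γ / β) ^ 2 * Real.exp (2 * lam * t) * W 0) :
    ∀ t : ℝ, 0 < t →
      V t ≤ lam * W 0 * (Real.exp (2 * lam * t) / (2 * lam * t) +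
        (1 / 4) * (1 + γ / β) ^ 2 *
          (2 * lam * t * Real.exp (2 * lam * t) - (Real.exp (2 * lam * t) - 1)) /
            (2 * lam * t)) := by
  intro t ht
  set c := (1 / 2) * lam ^ 2 * (1 + γ / β) ^ 2 * W 0
  have hV := mul_le_integral_add_integral_mul_of_deriv_le (g := fun s => c * Real.exp (2 * lam * s))
    ht.le (fun s hs => hderiv s hs.1) ((by fun_prop : Continuous _).intervalIntegrable _ _)
    (fun s hs => (h2 s hs.1).trans_eq (by ring))
  have hIV : ∫ s in (0 : ℝ)..t, V s ≤ Real.exp (2 * lam * t) * W 0 / 2 := by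
    linarith [h1 t ht, (hpos t ht.le).1]
  have hIg : ∫ s in (0 : ℝ)..t, s * (c * Real.exp (2 * lam * s)) =
      c * ((2 * lam * t * Real.exp (2 * lam * t) - Real.exp (2 * lam * t) + 1) / (2 * lam) ^ 2) := by
    simp_rw [mul_left_comm _ c, intervalIntegral.integral_const_mul,
      integral_mul_exp_mul (by positivity : 2 * lam ≠ 0)]
  rw [hIg] at hV
  have hrhs : lam * W 0 * (Real.exp (2 * lam * t) / (2 * lam * t) +
      (1 / 4) * (1 + γ / β) ^ 2 *
        (2 * lam * t * Real.exp (2 * lam * t) - (Real.exp (2 * lam * t) - 1)) / (2 * lam * t)) =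
      (Real.exp (2 * lam * t) * W 0 / 2 + c * ((2 * lam * t * Real.exp (2 * lam * t)
        - Real.exp (2 * lam * t) + 1) / (2 * lam) ^ 2)) / t := by
    simp only [c]
    field_simp
    ring
  rw [hrhs, le_div_iff₀ ht]
  linarith

/-- If nonnegative `W, V` on `[0,∞)` satisfy `W(t) + 2∫₀ᵗ V ≤ e^{2λt} W(0)` and
`V'(t) ≤ (1/2)λ²(1+γ/β)² e^{2λt} W(0)` for all `t > 0` (with `V` of class `C¹`), then
for every `t > 0`,
`V(t) ≤ λ W(0)[e^{2λt}/(2λt) + (1/4)(1+γ/β)²(2λt e^{2λt} − (e^{2λt} − 1))/(2λt)]`. -/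
theorem stmt18 (W V V' : ℝ → ℝ) (lam γ β : ℝ)
    (hlam : 0 < lam) (hγ : 0 < γ) (hβ : 0 < β)
    (hpos : ∀ t : ℝ, 0 ≤ t → 0 ≤ W t ∧ 0 ≤ V t)
    (hderiv : ∀ t : ℝ, 0 ≤ t → HasDerivAt V (V' t) t)
    (hcont : ContinuousOn V' (Set.Ici (0 : ℝ)))
    (h1 : ∀ t : ℝ, 0 < t →
      W t + 2 * ∫ s in (0 : ℝ)..t, V s ≤ Real.exp (2 * lam * t) * W 0)
    (h2 : ∀ t : ℝ, 0 < t →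
      V' t ≤ (1 / 2) * lam ^ 2 * (1 + γ / β) ^ 2 * Real.exp (2 * lam * t) * W 0) :
    ∀ t : ℝ, 0 < t →
      V t ≤ lam * W 0 * (Real.exp (2 * lam * t) / (2 * lam * t) +
        (1 / 4) * (1 + γ / β) ^ 2 *
          (2 * lam * t * Real.exp (2 * lam * t) - (Real.exp (2 * lam * t) - 1)) /
            (2 * lam * t)) :=
  stmt18_general W V V' lam γ β hlam hpos hderiv h1 h2
end
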